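/- Let g be a quasitriangular Lie bialgebra and let b be a g-covariant Lie algebra in the category of g-modules. Then the infinitesimal braiding ψ : b ⊗ b → b ⊗ b defined by ψ(a ⊗ b) = 2r₊ ▷ (a ⊗ b − b ⊗ a), where 2r₊ = r + τ(r) acts via the extended action on the tensor square, is a 2-cocycle in Z²_ad(b, b ⊗ b). -/

import Mathlib

/-!
A derivation is a 1-cocycle for the adjoint action, and the cup product
`(D ∪ E)(u, v) = D u ⊗ E v - D v ⊗ E u` of two 1-cocycles is a 2-cocycle with values in the
tensor product. Each `a ∈ g` acts on `B` by a derivation `Dₐ`, and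
`ψ = ∑ᵢ (D_{raᵢ} ∪ D_{rbᵢ} + D_{rbᵢ} ∪ D_{raᵢ})`, so `ψ` is a 2-cocycle.
-/

open scoped TensorProduct
open LieModule.Cohomology

namespace LieDerivation

section Cup

variable {R L M N : Type*} [CommRing R] [LieRing L] [LieAlgebra R L]
  [AddCommGroup M] [Module R M] [LieRingModule L M] [LieModule R L M]
  [AddCommGroup N] [Module R N] [LieRingModule L N] [LieModule R L N]

def cup (D : LieDerivation R L M) (E : LieDerivation R L N) : twoCochain R L (M ⊗[R] N) :=
  ⟨(TensorProduct.mk R M N).compl₁₂ D E - ((TensorProduct.mk R M N).compl₁₂ D E).flip,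
    fun _ => by simp⟩

@[simp]
lemma cup_apply (D : LieDerivation R L M) (E : LieDerivation R L N) (u v : L) :
    cup D E u v = D u ⊗ₜ E v - D v ⊗ₜ E u := by
  simp [cup, ← twoCochain_val_apply]

lemma cup_mem_twoCocycle (D : LieDerivation R L M) (E : LieDerivation R L N) :
    cup D E ∈ twoCocycle R L (M ⊗[R] N) := by
  rw [mem_twoCocycle_iff]
  ext x y z
  simp only [d₂₃_apply, cup_apply, apply_lie_eq_sub, lie_sub, TensorProduct.sub_tmul,
    TensorProduct.tmul_sub, TensorProduct.LieModule.lie_tmul_right, LinearMap.zero_apply]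
  abel

end Cup

variable {R g B : Type*} [CommRing R] [LieRing g] [LieAlgebra R g] [LieRing B] [LieAlgebra R B]
  [LieRingModule g B] [LieModule R g B]

def ofLieAction (x : g) (hx : ∀ u v : B, ⁅x, ⁅u, v⁆⁆ = ⁅⁅x, u⁆, v⁆ + ⁅u, ⁅x, v⁆⁆) :
    LieDerivation R B B where
  __ := LieModule.toEnd R g B x
  leibniz' u v := by
    simp only [LieModule.toEnd_apply_apply, hx, ← lie_skew ⁅x, u⁆ v]
    abel

@[simp]
lemma ofLieAction_apply (x : g) (hx : ∀ u v : B, ⁅x, ⁅u, v⁆⁆ = ⁅⁅x, u⁆, v⁆ + ⁅u, ⁅x, v⁆⁆)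
    (u : B) : ofLieAction (R := R) x hx u = ⁅x, u⁆ :=
  rfl

end LieDerivation

open LieDerivation in
theorem stmt6_general
    (g : Type) [LieRing g] [LieAlgebra ℂ g]
    (ι : Type) [Fintype ι] (ra rb : ι → g)
    (B : Type) [LieRing B] [LieAlgebra ℂ B]
    [LieRingModule g B] [LieModule ℂ g B]
    -- `g` acts on the Lie algebra `B` by derivations (g-covariant Lie algebra)
    (hcov : ∀ (x : g) (u v : B), ⁅x, ⁅u, v⁆⁆ = ⁅⁅x, u⁆, v⁆ + ⁅u, ⁅x, v⁆⁆)
    -- the infinitesimal braiding ψ(u ⊗ v) = 2r₊ ▷ (u ⊗ v − v ⊗ u)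
    (ψ : B → B → B ⊗[ℂ] B)
    (hψ : ∀ u v : B, ψ u v = ∑ i : ι,
        (⁅ra i, u⁆ ⊗ₜ[ℂ] ⁅rb i, v⁆ + ⁅rb i, u⁆ ⊗ₜ[ℂ] ⁅ra i, v⁆
          - ⁅ra i, v⁆ ⊗ₜ[ℂ] ⁅rb i, u⁆ - ⁅rb i, v⁆ ⊗ₜ[ℂ] ⁅ra i, u⁆)) :
    -- ψ is a 2-cocycle: dψ = 0 in the Chevalley–Eilenberg complex of B with values in B ⊗ B
    ∀ x y z : B,
      ⁅x, ψ y z⁆ - ⁅y, ψ x z⁆ + ⁅z, ψ x y⁆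
        - ψ ⁅x, y⁆ z + ψ ⁅x, z⁆ y - ψ ⁅y, z⁆ x = 0 := by
  let act (a : g) : LieDerivation ℂ B B := ofLieAction a (hcov a)
  let c := ∑ i, (cup (act (ra i)) (act (rb i)) + cup (act (rb i)) (act (ra i)))
  have hc : c ∈ twoCocycle ℂ B (B ⊗[ℂ] B) :=
    Submodule.sum_mem _ fun i _ => add_mem (cup_mem_twoCocycle _ _) (cup_mem_twoCocycle _ _)
  have hcψ : ∀ u v, c u v = ψ u v := by
    intro u v
    simp only [c, hψ, ← twoCochain_val_apply, Submodule.coe_sum, Submodule.coe_add,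
      LinearMap.sum_apply, LinearMap.add_apply]
    refine Finset.sum_congr rfl fun i _ => ?_
    simp only [twoCochain_val_apply, cup_apply, act, ofLieAction_apply]
    abel
  intro x y z
  simpa only [d₂₃_apply, hcψ, LinearMap.zero_apply] using congr($((mem_twoCocycle_iff ℂ B _ c).1 hc) x y z)

/-- Let `(g, r)` be a quasitriangular Lie bialgebra over ℂ, with
`r = Σᵢ ra i ⊗ rb i` satisfying the classical Yang–Baxter equation and with ad-invariant
symmetric part `2r₊ = Σᵢ (ra i ⊗ rb i + rb i ⊗ ra i)`.  Let `B` be a `g`-covariant Lie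
algebra in the category of `g`-modules (the `g`-action is by derivations of the bracket of
`B`).  Then the infinitesimal braiding `ψ(a ⊗ b) = 2r₊ ▷ (a ⊗ b − b ⊗ a)` is a 2-cocycle in
`Z²_ad(B, B ⊗ B)`, i.e. its Chevalley–Eilenberg differential with respect to the adjoint
action of `B` on `B ⊗ B` vanishes. -/
theorem stmt6
    (g : Type) [LieRing g] [LieAlgebra ℂ g]
    (ι : Type) [Fintype ι] (ra rb : ι → g)
    -- classical Yang–Baxter equation [[r,r]] = [r₁₂,r₁₃] + [r₁₂,r₂₃] + [r₁₃,r₂₃] = 0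
    (hCYBE : (∑ i : ι, ∑ j : ι,
        (⁅ra i, ra j⁆ ⊗ₜ[ℂ] (rb i ⊗ₜ[ℂ] rb j)
          + ra i ⊗ₜ[ℂ] (⁅rb i, ra j⁆ ⊗ₜ[ℂ] rb j)
          + ra i ⊗ₜ[ℂ] (ra j ⊗ₜ[ℂ] ⁅rb i, rb j⁆))) = (0 : g ⊗[ℂ] (g ⊗[ℂ] g)))
    -- ad-invariance of the symmetric part 2r₊
    (hinv : ∀ x : g, (∑ i : ι,
        (⁅x, ra i⁆ ⊗ₜ[ℂ] rb i + ra i ⊗ₜ[ℂ] ⁅x, rb i⁆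
          + ⁅x, rb i⁆ ⊗ₜ[ℂ] ra i + rb i ⊗ₜ[ℂ] ⁅x, ra i⁆)) = (0 : g ⊗[ℂ] g))
    (B : Type) [LieRing B] [LieAlgebra ℂ B]
    [LieRingModule g B] [LieModule ℂ g B]
    -- `g` acts on the Lie algebra `B` by derivations (g-covariant Lie algebra)
    (hcov : ∀ (x : g) (u v : B), ⁅x, ⁅u, v⁆⁆ = ⁅⁅x, u⁆, v⁆ + ⁅u, ⁅x, v⁆⁆)
    -- the infinitesimal braiding ψ(u ⊗ v) = 2r₊ ▷ (u ⊗ v − v ⊗ u)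
    (ψ : B → B → B ⊗[ℂ] B)
    (hψ : ∀ u v : B, ψ u v = ∑ i : ι,
        (⁅ra i, u⁆ ⊗ₜ[ℂ] ⁅rb i, v⁆ + ⁅rb i, u⁆ ⊗ₜ[ℂ] ⁅ra i, v⁆
          - ⁅ra i, v⁆ ⊗ₜ[ℂ] ⁅rb i, u⁆ - ⁅rb i, v⁆ ⊗ₜ[ℂ] ⁅ra i, u⁆)) :
    -- ψ is a 2-cocycle: dψ = 0 in the Chevalley–Eilenberg complex of B with values in B ⊗ B
    ∀ x y z : B,
      ⁅x, ψ y z⁆ - ⁅y, ψ x z⁆ + ⁅z, ψ x y⁆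
        - ψ ⁅x, y⁆ z + ψ ⁅x, z⁆ y - ψ ⁅y, z⁆ x = 0 :=
  stmt6_general g ι ra rb B hcov ψ hψ
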